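/- (Theorem 3.1(ii), deterministic core.) Under the Dantzig-selector hypotheses, with h := θ₀ − θ̂, K₂ := (8/ν)‖θ₀‖₁ and K₃ := 4‖θ₀‖₁², one has F_∞(T₀; J)² · ‖θ̂ − θ₀‖_∞² ≤ K₂ γ + K₃ ε, where ε := max_{i,j} |(V(θ₀) − J)_{ij}|. -/

import Mathlib

open Finset

/-- ℓ₁ norm on `Fin p → ℝ`. -/
noncomputable def l1 {p : ℕ} (v : Fin p → ℝ) : ℝ := ∑ i, |v i|

/-- ℓ₁ norm of the subvector indexed by `T`. -/
noncomputable def l1on {p : ℕ} (T : Finset (Fin p)) (v : Fin p → ℝ) : ℝ := ∑ i ∈ T, |v i|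

/-- ℓ₂ norm on `Fin p → ℝ`. -/
noncomputable def l2 {p : ℕ} (v : Fin p → ℝ) : ℝ := Real.sqrt (∑ i, (v i) ^ 2)

/-- ℓ_∞ norm on `Fin p → ℝ`. -/
noncomputable def linf {p : ℕ} (v : Fin p → ℝ) : ℝ := ⨆ i, |v i|

/-- ℓ_q norm on `Fin p → ℝ` for real `q ≥ 1`. -/
noncomputable def lqnorm {p : ℕ} (q : ℝ) (v : Fin p → ℝ) : ℝ := (∑ i, |v i| ^ q) ^ (1 / q)

/-- Quadratic form `hᵀ J h`. -/
noncomputable def quadForm {p : ℕ} (J : Matrix (Fin p) (Fin p) ℝ) (h : Fin p → ℝ) : ℝ :=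
  ∑ i, ∑ j, h i * J i j * h j

/-- The cone `C_T = {h : ‖h_{Tᶜ}‖₁ ≤ ‖h_T‖₁}`. -/
def cone {p : ℕ} (T : Finset (Fin p)) : Set (Fin p → ℝ) := {h | l1on Tᶜ h ≤ l1on T h}

/-- Compatibility factor `κ(T; J)`. -/
noncomputable def kappa {p : ℕ} (T : Finset (Fin p)) (J : Matrix (Fin p) (Fin p) ℝ) : ℝ :=
  sInf {r | ∃ h : Fin p → ℝ, h ≠ 0 ∧ h ∈ cone T ∧
    r = Real.sqrt T.card * Real.sqrt (quadForm J h) / l1on T h}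

/-- Restricted eigenvalue `RE(T; J)`. -/
noncomputable def RE {p : ℕ} (T : Finset (Fin p)) (J : Matrix (Fin p) (Fin p) ℝ) : ℝ :=
  sInf {r | ∃ h : Fin p → ℝ, h ≠ 0 ∧ h ∈ cone T ∧
    r = Real.sqrt (quadForm J h) / l2 h}

/-- Weak cone invertibility factor at `q = ∞`, `F_∞(T; J)`. -/
noncomputable def Finf {p : ℕ} (T : Finset (Fin p)) (J : Matrix (Fin p) (Fin p) ℝ) : ℝ :=
  sInf {r | ∃ h : Fin p → ℝ, h ≠ 0 ∧ h ∈ cone T ∧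
    r = Real.sqrt (quadForm J h) / linf h}

/-- Weak cone invertibility factor `F_q(T; J)` for `q ∈ [1,∞)`
(with the quadratic form without square root, as in the paper's proofs). -/
noncomputable def Fq {p : ℕ} (q : ℝ) (T : Finset (Fin p)) (J : Matrix (Fin p) (Fin p) ℝ) : ℝ :=
  sInf {r | ∃ h : Fin p → ℝ, h ≠ 0 ∧ h ∈ cone T ∧
    r = (T.card : ℝ) ^ (1 / q) * quadForm J h / (l1on T h * lqnorm q h)}

/-- `g(x) = (e^{2x} - 1)/x` for `x ≠ 0`, `g(0) = 2`. -/
noncomputable def g (x : ℝ) : ℝ := if x = 0 then 2 else (Real.exp (2 * x) - 1) / x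

/-- Gradient of the log-quasi-likelihood (divided by `n`), with `b = 0`, `Δ = 1/n`:
`ψ(θ)_i = (1/(nΔ)) Σ_k z_{k,i}(e^{-2⟨θ,z_k⟩}(x_k - x_{k-1})² - Δ)`. -/
noncomputable def psiD {n p : ℕ} (x : Fin (n + 1) → ℝ) (z : Fin n → Fin p → ℝ)
    (θ : Fin p → ℝ) (i : Fin p) : ℝ :=
  (1 / ((n : ℝ) * (1 / n))) * ∑ k, z k i *
    (Real.exp (-2 * ∑ j, θ j * z k j) * (x k.succ - x k.castSucc) ^ 2 - 1 / n)

/-- Negative Hessian (divided by `n`):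
`V(θ) = (2/(nΔ)) Σ_k e^{-2⟨θ,z_k⟩}(x_k - x_{k-1})² z_k z_kᵀ`. -/
noncomputable def VD {n p : ℕ} (x : Fin (n + 1) → ℝ) (z : Fin n → Fin p → ℝ)
    (θ : Fin p → ℝ) : Matrix (Fin p) (Fin p) ℝ := fun i j =>
  (2 / ((n : ℝ) * (1 / n))) * ∑ k, Real.exp (-2 * ∑ l, θ l * z k l) *
    (x k.succ - x k.castSucc) ^ 2 * z k i * z k j

/-- `J = (2/n) Σ_k z_k z_kᵀ`. -/
noncomputable def JD {n p : ℕ} (z : Fin n → Fin p → ℝ) : Matrix (Fin p) (Fin p) ℝ :=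
  fun i j => (2 / (n : ℝ)) * ∑ k, z k i * z k j

/-- `ε = max_{i,j} |(V(θ) - J)_{ij}|`. -/
noncomputable def epsD {n p : ℕ} (x : Fin (n + 1) → ℝ) (z : Fin n → Fin p → ℝ)
    (θ : Fin p → ℝ) : ℝ :=
  ⨆ i, ⨆ j, |VD x z θ i j - JD z i j|

/-! Put `h = θ̂ - θ₀`. Since `θ₀` vanishes off `T₀` and `‖θ̂‖₁ ≤ ‖θ₀‖₁`, `h` lies in the cone
`C_{T₀}` and `‖h‖₁ ≤ 2‖θ₀‖₁`. Paired with `h`, the gradient difference `ψ(θ₀) - ψ(θ₀ + h)` is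
`Σ_k w_k a_k (1 - e^{-2a_k})` with `w_k = e^{-2⟨θ₀,z_k⟩}(x_k - x_{k-1})² ≥ 0` and `a_k = ⟨h, z_k⟩`,
while `hᵀV(θ₀)h = 2 Σ_k w_k a_k²`. As `|a_k| ≤ 2C‖θ₀‖₁` and `a(1 - e^{-2a}) = a² g(-a) ≥ ν a²`,
this gives `ν hᵀV(θ₀)h ≤ 2⟨h, ψ(θ₀) - ψ(θ̂)⟩ ≤ 4γ‖h‖₁`. Replacing `V(θ₀)` by `J` costs at most
`ε‖h‖₁²`, and the definition of `F_∞` gives `F_∞² ‖h‖_∞² ≤ hᵀJh`. -/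

section Norms

variable {p : ℕ}

lemma abs_le_linf (v : Fin p → ℝ) (i : Fin p) : |v i| ≤ linf v :=
  le_ciSup (Set.finite_range fun i => |v i|).bddAbove i

lemma linf_nonneg (v : Fin p → ℝ) : 0 ≤ linf v :=
  Real.iSup_nonneg fun i => abs_nonneg (v i)

lemma l1_nonneg (v : Fin p → ℝ) : 0 ≤ l1 v :=
  Finset.sum_nonneg fun i _ => abs_nonneg (v i)

lemma l1_sub_le (u v : Fin p → ℝ) : l1 (u - v) ≤ l1 u + l1 v := by
  unfold l1
  rw [← Finset.sum_add_distrib]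
  exact Finset.sum_le_sum fun i _ => abs_sub (u i) (v i)

lemma abs_dotProduct_le_l1_mul {h w : Fin p → ℝ} {C : ℝ} (hw : ∀ i, |w i| ≤ C) :
    |h ⬝ᵥ w| ≤ l1 h * C := by
  unfold l1
  rw [Finset.sum_mul]
  refine (Finset.abs_sum_le_sum_abs _ _).trans (Finset.sum_le_sum fun i _ => ?_)
  rw [abs_mul]
  exact mul_le_mul_of_nonneg_left (hw i) (abs_nonneg _)

lemma abs_dotProduct_le_l1_mul_linf (h v : Fin p → ℝ) : |h ⬝ᵥ v| ≤ l1 h * linf v :=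
  abs_dotProduct_le_l1_mul (abs_le_linf v)

lemma dotProduct_sub_le (h u v : Fin p → ℝ) : h ⬝ᵥ (u - v) ≤ l1 h * (linf u + linf v) := by
  rw [dotProduct_sub, mul_add]
  linarith [le_abs_self (h ⬝ᵥ u), neg_abs_le (h ⬝ᵥ v), abs_dotProduct_le_l1_mul_linf h u,
    abs_dotProduct_le_l1_mul_linf h v]

lemma sub_mem_cone_of_l1_le {T : Finset (Fin p)} {θ₀ θ : Fin p → ℝ}
    (hsupp : ∀ j ∉ T, θ₀ j = 0) (hle : l1 θ ≤ l1 θ₀) : θ - θ₀ ∈ cone T := by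
  have hθ₀ : l1 θ₀ = l1on T θ₀ := by
    rw [l1, ← Finset.sum_add_sum_compl T, l1on, add_eq_left]
    exact Finset.sum_eq_zero fun j hj => by rw [hsupp j (Finset.mem_compl.1 hj), abs_zero]
  have hθ : l1 θ = l1on T θ + l1on Tᶜ (θ - θ₀) := by
    rw [l1, ← Finset.sum_add_sum_compl T]
    congr 1
    exact Finset.sum_congr rfl fun j hj => by simp [hsupp j (Finset.mem_compl.1 hj)]
  have hT : l1on T θ₀ ≤ l1on T θ + l1on T (θ - θ₀) := by
    rw [l1on, l1on, l1on, ← Finset.sum_add_distrib]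
    refine Finset.sum_le_sum fun j _ => ?_
    rw [Pi.sub_apply, abs_sub_comm]
    linarith [abs_sub_abs_le_abs_sub (θ₀ j) (θ j)]
  show l1on Tᶜ (θ - θ₀) ≤ l1on T (θ - θ₀)
  linarith

end Norms

section QuadForm

variable {p : ℕ}

lemma quadForm_sum_outer {n : ℕ} (c : ℝ) (w : Fin n → ℝ) (z : Fin n → Fin p → ℝ)
    (h : Fin p → ℝ) :
    quadForm (fun i j => c * ∑ k, w k * z k i * z k j) h = c * ∑ k, w k * (h ⬝ᵥ z k) ^ 2 := by
  simp only [quadForm, dotProduct, sq, Finset.mul_sum, Finset.sum_mul]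
  conv_rhs => rw [Finset.sum_comm]; enter [2, i]; rw [Finset.sum_comm]
  exact Finset.sum_congr rfl fun i _ => Finset.sum_congr rfl fun j _ =>
    Finset.sum_congr rfl fun k _ => by ring

lemma quadForm_le_add_l1_sq_mul {A B : Matrix (Fin p) (Fin p) ℝ} {ε : ℝ}
    (hAB : ∀ i j, |A i j - B i j| ≤ ε) (h : Fin p → ℝ) :
    quadForm A h ≤ quadForm B h + l1 h ^ 2 * ε := by
  have hentry : ∀ i j, h i * A i j * h j ≤ h i * B i j * h j + |h i| * |h j| * ε := by
    intro i j
    have hdiff : h i * (A i j - B i j) * h j ≤ |h i| * |h j| * ε := by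
      calc h i * (A i j - B i j) * h j ≤ |h i| * |A i j - B i j| * |h j| := by
            rw [← abs_mul, ← abs_mul]
            exact le_abs_self _
        _ ≤ |h i| * ε * |h j| := by gcongr; exact hAB i j
        _ = |h i| * |h j| * ε := by ring
    linarith
  calc quadForm A h ≤ ∑ i, ∑ j, (h i * B i j * h j + |h i| * |h j| * ε) :=
        Finset.sum_le_sum fun i _ => Finset.sum_le_sum fun j _ => hentry i j
    _ = quadForm B h + l1 h ^ 2 * ε := by
        rw [quadForm, l1, sq, Finset.sum_mul_sum, Finset.sum_mul, ← Finset.sum_add_distrib]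
        exact Finset.sum_congr rfl fun i _ => by rw [Finset.sum_mul, ← Finset.sum_add_distrib]

lemma Finf_sq_mul_linf_sq_le {T : Finset (Fin p)} {J : Matrix (Fin p) (Fin p) ℝ}
    {h : Fin p → ℝ} (hJ : 0 ≤ quadForm J h) (hh : h ∈ cone T) :
    Finf T J ^ 2 * linf h ^ 2 ≤ quadForm J h := by
  rcases eq_or_ne h 0 with rfl | hne
  · simpa [linf] using hJ
  have hlinf : 0 < linf h := by
    obtain ⟨i, hi⟩ := Function.ne_iff.1 hne
    exact (abs_pos.2 hi).trans_le (abs_le_linf h i)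
  have hF : Finf T J ≤ √(quadForm J h) / linf h :=
    csInf_le ⟨0, fun r ⟨h', _, _, hr⟩ => hr ▸ div_nonneg (Real.sqrt_nonneg _) (linf_nonneg h')⟩
      ⟨h, hne, hh, rfl⟩
  have hF0 : 0 ≤ Finf T J :=
    Real.sInf_nonneg fun r ⟨h', _, _, hr⟩ => hr ▸ div_nonneg (Real.sqrt_nonneg _) (linf_nonneg h')
  calc Finf T J ^ 2 * linf h ^ 2 ≤ (√(quadForm J h) / linf h) ^ 2 * linf h ^ 2 := by gcongr
    _ = quadForm J h := by rw [div_pow, Real.sq_sqrt hJ, div_mul_cancel₀ _ (by positivity)]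

end QuadForm

lemma g_pos (x : ℝ) : 0 < g x := by
  unfold g
  split_ifs with hx
  · norm_num
  rcases lt_or_gt_of_ne hx with hx | hx
  · exact div_pos_of_neg_of_neg (by linarith [Real.exp_lt_one_iff.2 (by linarith : 2 * x < 0)]) hx
  · exact div_pos (by linarith [Real.one_lt_exp_iff.2 (by linarith : 0 < 2 * x)]) hx

lemma mul_sq_le_mul_one_sub_exp {ν a : ℝ} (hν : ν ≤ g (-a)) :
    ν * a ^ 2 ≤ a * (1 - Real.exp (-2 * a)) := by
  rcases eq_or_ne a 0 with rfl | ha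
  · simp
  have : a * (1 - Real.exp (-2 * a)) = a ^ 2 * g (-a) := by
    rw [g, if_neg (neg_ne_zero.2 ha), mul_neg, ← neg_mul]
    field_simp
    ring
  rw [this, mul_comm]
  exact mul_le_mul_of_nonneg_left hν (sq_nonneg a)

section Model

variable {n p : ℕ} (x : Fin (n + 1) → ℝ) (z : Fin n → Fin p → ℝ)

noncomputable def scaledSqIncr (θ : Fin p → ℝ) (k : Fin n) : ℝ :=
  Real.exp (-2 * (θ ⬝ᵥ z k)) * (x k.succ - x k.castSucc) ^ 2

lemma scaledSqIncr_nonneg (θ : Fin p → ℝ) (k : Fin n) : 0 ≤ scaledSqIncr x z θ k := by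
  unfold scaledSqIncr
  positivity

lemma scaledSqIncr_add (θ h : Fin p → ℝ) (k : Fin n) :
    scaledSqIncr x z (θ + h) k = scaledSqIncr x z θ k * Real.exp (-2 * (h ⬝ᵥ z k)) := by
  rw [scaledSqIncr, scaledSqIncr, add_dotProduct, mul_add, Real.exp_add]
  ring

lemma psiD_eq (θ : Fin p → ℝ) (i : Fin p) :
    psiD x z θ i = 1 / ((n : ℝ) * (1 / n)) * ∑ k, z k i * (scaledSqIncr x z θ k - 1 / n) :=
  rfl

lemma quadForm_VD (θ h : Fin p → ℝ) :
    quadForm (VD x z θ) h =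
      2 / ((n : ℝ) * (1 / n)) * ∑ k, scaledSqIncr x z θ k * (h ⬝ᵥ z k) ^ 2 :=
  quadForm_sum_outer _ _ z h

lemma dotProduct_psiD_sub_psiD_add (θ h : Fin p → ℝ) :
    h ⬝ᵥ (psiD x z θ - psiD x z (θ + h)) = 1 / ((n : ℝ) * (1 / n)) *
      ∑ k, scaledSqIncr x z θ k * ((h ⬝ᵥ z k) * (1 - Real.exp (-2 * (h ⬝ᵥ z k)))) := by
  simp only [dotProduct, Pi.sub_apply, psiD_eq, scaledSqIncr_add, ← mul_sub,
    ← Finset.sum_sub_distrib, Finset.mul_sum, Finset.sum_mul]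
  rw [Finset.sum_comm]
  exact Finset.sum_congr rfl fun k _ => Finset.sum_congr rfl fun i _ => by ring

lemma quadForm_JD_nonneg (h : Fin p → ℝ) : 0 ≤ quadForm (JD z) h := by
  have hJ : quadForm (JD z) h = 2 / (n : ℝ) * ∑ k, (h ⬝ᵥ z k) ^ 2 := by
    have := quadForm_sum_outer (2 / (n : ℝ)) 1 z h
    simp only [Pi.one_apply, one_mul] at this
    exact this
  rw [hJ]
  positivity

lemma abs_JD_sub_VD_le_epsD (θ : Fin p → ℝ) (i j : Fin p) :
    |JD z i j - VD x z θ i j| ≤ epsD x z θ := by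
  rw [abs_sub_comm]
  exact (le_ciSup (Set.finite_range _).bddAbove j).trans
    (le_ciSup (Set.finite_range fun i => ⨆ j, |VD x z θ i j - JD z i j|).bddAbove i)

lemma epsD_nonneg (θ : Fin p → ℝ) : 0 ≤ epsD x z θ :=
  Real.iSup_nonneg fun _ => Real.iSup_nonneg fun _ => abs_nonneg _

lemma mul_quadForm_VD_le {ν : ℝ} (θ h : Fin p → ℝ) (hν : ∀ k, ν ≤ g (-(h ⬝ᵥ z k))) :
    ν * quadForm (VD x z θ) h ≤ 2 * (h ⬝ᵥ (psiD x z θ - psiD x z (θ + h))) := by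
  have hsum : ν * ∑ k, scaledSqIncr x z θ k * (h ⬝ᵥ z k) ^ 2 ≤
      ∑ k, scaledSqIncr x z θ k * ((h ⬝ᵥ z k) * (1 - Real.exp (-2 * (h ⬝ᵥ z k)))) := by
    rw [Finset.mul_sum]
    refine Finset.sum_le_sum fun k _ => ?_
    rw [mul_left_comm]
    exact mul_le_mul_of_nonneg_left (mul_sq_le_mul_one_sub_exp (hν k))
      (scaledSqIncr_nonneg x z θ k)
  rw [quadForm_VD, dotProduct_psiD_sub_psiD_add]
  calc ν * (2 / ((n : ℝ) * (1 / n)) * ∑ k, scaledSqIncr x z θ k * (h ⬝ᵥ z k) ^ 2)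
      = 2 / ((n : ℝ) * (1 / n)) * (ν * ∑ k, scaledSqIncr x z θ k * (h ⬝ᵥ z k) ^ 2) := by ring
    _ ≤ 2 / ((n : ℝ) * (1 / n)) *
        ∑ k, scaledSqIncr x z θ k * ((h ⬝ᵥ z k) * (1 - Real.exp (-2 * (h ⬝ᵥ z k)))) := by
      gcongr
    _ = _ := by ring

lemma mul_quadForm_VD_le_of_linf_psiD_le {ν γ : ℝ} (θ h : Fin p → ℝ)
    (hν : ∀ k, ν ≤ g (-(h ⬝ᵥ z k))) (hθ : linf (psiD x z θ) ≤ γ)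
    (hθh : linf (psiD x z (θ + h)) ≤ γ) :
    ν * quadForm (VD x z θ) h ≤ 4 * γ * l1 h :=
  calc ν * quadForm (VD x z θ) h ≤ 2 * (h ⬝ᵥ (psiD x z θ - psiD x z (θ + h))) :=
        mul_quadForm_VD_le x z θ h hν
    _ ≤ 2 * (l1 h * (linf (psiD x z θ) + linf (psiD x z (θ + h)))) := by
        gcongr
        exact dotProduct_sub_le h _ _
    _ ≤ 2 * (l1 h * (γ + γ)) := by
        have := l1_nonneg h
        gcongr
    _ = 4 * γ * l1 h := by ring

end Model

theorem theorem_3_1_ii_general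
    (n p : ℕ)
    (C : ℝ) (hC : 0 < C)
    (x : Fin (n + 1) → ℝ) (z : Fin n → Fin p → ℝ)
    (hz : ∀ k i, |z k i| ≤ C)
    (θ₀ θhat : Fin p → ℝ)
    (ν : ℝ) (hν : IsLeast (g '' Set.Icc (-(2 * C * l1 θ₀)) (2 * C * l1 θ₀)) ν)
    (γ : ℝ)
    (hfeas : linf (psiD x z θhat) ≤ γ)
    (hmin : l1 θhat ≤ l1 θ₀)
    (htrue : linf (psiD x z θ₀) ≤ γ) :
    Finf (Finset.univ.filter fun j => θ₀ j ≠ 0) (JD z) ^ 2 * linf (θhat - θ₀) ^ 2 ≤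
      8 / ν * l1 θ₀ * γ + 4 * l1 θ₀ ^ 2 * epsD x z θ₀ := by
  set h := θhat - θ₀
  have hcone : h ∈ cone (Finset.univ.filter fun j => θ₀ j ≠ 0) :=
    sub_mem_cone_of_l1_le (fun j hj => by simpa using hj) hmin
  have hl1 : l1 h ≤ 2 * l1 θ₀ := (l1_sub_le θhat θ₀).trans (by linarith)
  have hν0 : 0 < ν := by
    obtain ⟨y, -, rfl⟩ := hν.1
    exact g_pos y
  have hg : ∀ k, ν ≤ g (-(h ⬝ᵥ z k)) := by
    refine fun k => hν.2 ⟨_, abs_le.1 ?_, rfl⟩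
    rw [abs_neg]
    calc |h ⬝ᵥ z k| ≤ l1 h * C := abs_dotProduct_le_l1_mul (hz k)
      _ ≤ 2 * l1 θ₀ * C := by gcongr
      _ = 2 * C * l1 θ₀ := by ring
  have hV : quadForm (VD x z θ₀) h ≤ 8 / ν * l1 θ₀ * γ := by
    have hcurv := mul_quadForm_VD_le_of_linf_psiD_le x z θ₀ h hg htrue
      (by rwa [add_sub_cancel])
    rw [div_mul_eq_mul_div, div_mul_eq_mul_div, le_div_iff₀ hν0]
    nlinarith [l1_nonneg h, linf_nonneg (psiD x z θ₀)]
  calc _ ≤ quadForm (JD z) h := Finf_sq_mul_linf_sq_le (quadForm_JD_nonneg z h) hcone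
    _ ≤ quadForm (VD x z θ₀) h + l1 h ^ 2 * epsD x z θ₀ :=
        quadForm_le_add_l1_sq_mul (abs_JD_sub_VD_le_epsD x z θ₀) h
    _ ≤ 8 / ν * l1 θ₀ * γ + (2 * l1 θ₀) ^ 2 * epsD x z θ₀ := by
        have := l1_nonneg h
        gcongr
        exact epsD_nonneg x z θ₀
    _ = _ := by ring

/-- Theorem 3.1(ii), deterministic core: with `K₂ := (8/ν)‖θ₀‖₁`, `K₃ := 4‖θ₀‖₁²` and
`ε := max_{i,j} |(V(θ₀) - J)_{ij}|`, one has `F_∞(T₀;J)² ‖θ̂ - θ₀‖_∞² ≤ K₂ γ + K₃ ε`. -/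
theorem theorem_3_1_ii
    (n p : ℕ) (hn : 0 < n) (hp : 0 < p)
    (C : ℝ) (hC : 0 < C)
    (x : Fin (n + 1) → ℝ) (z : Fin n → Fin p → ℝ)
    (hz : ∀ k i, |z k i| ≤ C)
    (θ₀ θhat : Fin p → ℝ)
    (ν : ℝ) (hν : IsLeast (g '' Set.Icc (-(2 * C * l1 θ₀)) (2 * C * l1 θ₀)) ν)
    (γ : ℝ) (hγ : 0 < γ)
    (hfeas : linf (psiD x z θhat) ≤ γ)
    (hmin : l1 θhat ≤ l1 θ₀)
    (htrue : linf (psiD x z θ₀) ≤ γ)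
    (hθ₀ : θ₀ ≠ 0) :
    Finf (Finset.univ.filter fun j => θ₀ j ≠ 0) (JD z) ^ 2 * linf (θhat - θ₀) ^ 2 ≤
      8 / ν * l1 θ₀ * γ + 4 * l1 θ₀ ^ 2 * epsD x z θ₀ :=
  theorem_3_1_ii_general n p C hC x z hz θ₀ θhat ν hν γ hfeas hmin htrue
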